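/- Let z be an optimal solution to the polymatroid sum problem and let G(z) be the exchange graph on vertex set E with an arc (e,f) whenever some buyer i has w_i(e,f) > 0 (i.e., z_i − χ_f + χ_e ∈ B_i). Then the inclusion-wise minimal maximal overdemanded set equals the set R of items from which an oversold item is reachable in G(z). -/

import Mathlib

/-!
Weak duality `Σ_e min(z(e), b(e)) ≤ Σ_i ρ_i(E∖S) + b(S)` holds for every allocation `z` and every
`S`, with equality exactly when `S` has the three characterizing properties; so once some set has
them, the minimizers of the dual are precisely the sets having them.

The set `R` of items from which an oversold item is reachable is closed under reverse arcs. For an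
M-convex set, optimality of `z_i(E∖R)` under single exchanges is global optimality, so `E∖R` is
tight. No undersold item lies in `R`: take an undersold `e` with a shortest walk `e → f → ⋯` to an
oversold item and move one unit of `f` to `e` in the buyer of the first arc. This keeps `z`
optimal and makes `f` undersold, and by the exchange axiom every arc of the rest of the walk
survives unless it yields an equally short walk from `e`; so `f` is an undersold item with a
shorter walk, and induction on the length concludes. Hence `R` has the three properties, and it
lies in every set `S` having them, since tightness of `E∖S` forbids arcs from `E∖S` into `S`.
-/

open Finset

variable {E : Type*} [Fintype E] [DecidableEq E]

/-- Characteristic (unit) vector of an item. -/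
def chi (e : E) : E → ℤ := fun f => if f = e then 1 else 0

/-- The integer box `[0, b]_ℤ`. -/
def Box (b : E → ℤ) : Set (E → ℤ) := {z | ∀ e, 0 ≤ z e ∧ z e ≤ b e}

/-- M-convex set: exchange property. -/
def MConvex (B : Set (E → ℤ)) : Prop :=
  ∀ x ∈ B, ∀ y ∈ B, ∀ e : E, y e < x e →
    ∃ f : E, x f < y f ∧ x - chi e + chi f ∈ B ∧ y + chi e - chi f ∈ B

/-- `ρ` is the rank function of `B`: `ρ S = max {z(S) : z ∈ B}`. -/
def IsRank (B : Set (E → ℤ)) (ρ : Finset E → ℤ) : Prop :=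
  ∀ S : Finset E, IsGreatest ((fun z : E → ℤ => ∑ e ∈ S, z e) '' B) (ρ S)

/-- A set `S` is tight for `z` if `z(S) = ρ S`. -/
def Tight (ρ : Finset E → ℤ) (z : E → ℤ) (S : Finset E) : Prop :=
  ∑ e ∈ S, z e = ρ S

/-- Total supply covered by the allocation `z`, capped by `b`. -/
def coveredValue {N : Type*} [Fintype N] (b : E → ℤ) (z : N → E → ℤ) : ℤ :=
  ∑ e : E, min (∑ i, z i e) (b e)

/-- The dual objective `Σ_i ρ_i(E∖S) + b(S)`. -/
def dualValue {N : Type*} [Fintype N] (b : E → ℤ) (ρ : N → Finset E → ℤ)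
    (S : Finset E) : ℤ :=
  ∑ i, ρ i Sᶜ + ∑ e ∈ S, b e

/-- The three characterizing properties of a maximal overdemanded set, given an
optimal allocation `z`: the complement is `i`-tight for all `i`, `S` contains no
undersold item, and `S` contains every oversold item. -/
def OverProps {N : Type*} [Fintype N] (b : E → ℤ) (ρ : N → Finset E → ℤ)
    (z : N → E → ℤ) (S : Finset E) : Prop :=
  (∀ i, ∑ e ∈ Sᶜ, z i e = ρ i Sᶜ) ∧
  (∀ e ∈ S, ¬ (∑ i, z i e < b e)) ∧
  (∀ e, b e < ∑ i, z i e → e ∈ S)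


/-- Exchange-graph arc: some buyer can exchange one unit of `f` for one unit of `e`. -/
def ExArc {N : Type*} (B : N → Set (E → ℤ)) (z : N → E → ℤ) (e f : E) : Prop :=
  ∃ i, z i - chi f + chi e ∈ B i

set_option linter.unusedSectionVars false

lemma chi_apply (e f : E) : chi e f = if f = e then 1 else 0 := rfl

lemma sum_chi (s : Finset E) (e : E) : ∑ t ∈ s, chi e t = if e ∈ s then 1 else 0 := by
  simp [chi_apply]

lemma sum_mul_chi (w : E → ℤ) (e : E) : ∑ t, w t * chi e t = w e := by
  simp [chi_apply]

namespace MConvex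

variable {B : Set (E → ℤ)}

theorem exists_lt_of_ne (hM : MConvex B) {x y : E → ℤ} (hx : x ∈ B) (hy : y ∈ B)
    (hxy : x ≠ y) : ∃ e, x e < y e := by
  by_contra! hle
  obtain ⟨e, he⟩ := Function.ne_iff.mp hxy
  obtain ⟨f, hf, -⟩ := hM x hx y hy e (lt_of_le_of_ne (hle e) he.symm)
  exact (hle f).not_gt hf

theorem sum_mul_le_of_forall_exchange (hM : MConvex B) {x : E → ℤ} (hx : x ∈ B) (w : E → ℤ)
    (hloc : ∀ e f, x - chi f + chi e ∈ B → w e ≤ w f) {y : E → ℤ} (hy : y ∈ B) :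
    ∑ t, w t * y t ≤ ∑ t, w t * x t := by
  induction hn : ∑ t, (y t - x t).natAbs using Nat.strong_induction_on generalizing y with
  | _ n ih =>
  obtain rfl | hxy := eq_or_ne x y
  · rfl
  obtain ⟨e, he⟩ := hM.exists_lt_of_ne hx hy hxy
  obtain ⟨f, hf, hy', hx'⟩ := hM y hy x hx e he
  have hwef : w e ≤ w f := hloc e f (by rwa [sub_add_eq_add_sub])
  have hcloser : ∑ t, ((y - chi e + chi f) t - x t).natAbs < n := by
    rw [← hn]
    refine Finset.sum_lt_sum (fun t _ => ?_) ⟨e, mem_univ e, ?_⟩ <;>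
      simp only [Pi.add_apply, Pi.sub_apply, chi_apply] <;> split_ifs <;> subst_vars <;> omega
  calc ∑ t, w t * y t ≤ ∑ t, w t * (y - chi e + chi f) t := by
        simp only [Pi.add_apply, Pi.sub_apply, mul_add, mul_sub, sum_add_distrib,
          sum_sub_distrib, sum_mul_chi]
        linarith
    _ ≤ ∑ t, w t * x t := ih _ hcloser hy' rfl

theorem exchange_or_double_exchange (hM : MConvex B) {x : E → ℤ} {a b c d : E}
    (hab : x - chi a + chi b ∈ B) (hcd : x - chi c + chi d ∈ B) (hba : b ≠ a) (hbd : b ≠ d) :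
    x - chi a + chi d ∈ B ∨ x - chi a + chi b - chi c + chi d ∈ B := by
  obtain ⟨g, hg, hmem, hmem'⟩ := hM _ hab _ hcd b (by
    simp only [Pi.add_apply, Pi.sub_apply, chi_apply, if_neg hba, if_neg hbd]
    split_ifs <;> omega)
  obtain rfl | rfl : g = d ∨ g = a := by
    by_contra! h
    simp only [Pi.add_apply, Pi.sub_apply, chi_apply, if_neg h.1, if_neg h.2] at hg
    split_ifs at hg <;> omega
  · left
    convert hmem using 1
    abel
  · right
    convert hmem' using 1
    abel

end MConvex

section Tightness

variable {B : Set (E → ℤ)} {ρ : Finset E → ℤ} {x : E → ℤ} {U : Finset E}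

theorem Tight.mem_of_exchange (hρ : IsRank B ρ) (ht : Tight ρ x U) {e f : E}
    (hexch : x - chi f + chi e ∈ B) (he : e ∈ U) : f ∈ U := by
  by_contra hf
  have hle := (hρ U).2 ⟨_, hexch, rfl⟩
  simp only [Pi.add_apply, Pi.sub_apply, sum_add_distrib, sum_sub_distrib, sum_chi, if_pos he,
    if_neg hf] at hle
  unfold Tight at ht
  omega

theorem MConvex.tight_of_forall_exchange (hM : MConvex B) (hρ : IsRank B ρ) (hx : x ∈ B)
    (hloc : ∀ e f, x - chi f + chi e ∈ B → e ∈ U → f ∈ U) : Tight ρ x U := by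
  obtain ⟨y, hy, hyU⟩ := (hρ U).1
  have hle := hM.sum_mul_le_of_forall_exchange hx (fun t => if t ∈ U then 1 else 0)
    (fun e f h => by
      by_cases he : e ∈ U <;> by_cases hf : f ∈ U <;> simp [he, hf]
      exact hf (hloc e f h he)) hy
  simp only [ite_mul, one_mul, zero_mul, sum_ite_mem, univ_inter] at hle
  exact le_antisymm ((hρ U).2 ⟨x, hx, rfl⟩) (hyU ▸ hle)

end Tightness

def ReachesIn {α : Type*} (r : α → α → Prop) (p : α → Prop) : ℕ → α → Prop
  | 0, a => p a
  | n + 1, a => ∃ a', r a a' ∧ ReachesIn r p n a'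

theorem Relation.ReflTransGen.exists_reachesIn {α : Type*} {r : α → α → Prop} {p : α → Prop}
    {a a' : α} (h : Relation.ReflTransGen r a a') (hp : p a') : ∃ n, ReachesIn r p n a := by
  induction h using Relation.ReflTransGen.head_induction_on with
  | refl => exact ⟨0, hp⟩
  | head hr _ ih =>
    obtain ⟨n, hn⟩ := ih
    exact ⟨n + 1, _, hr, hn⟩

section PolymatroidSum

variable {N : Type*} [Fintype N] {b : E → ℤ} {B : N → Set (E → ℤ)} {ρ : N → Finset E → ℤ}
  {z : N → E → ℤ}

theorem coveredValue_eq_sum_compl_add_sum (S : Finset E) :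
    coveredValue b z
      = ∑ e ∈ Sᶜ, min (∑ i, z i e) (b e) + ∑ e ∈ S, min (∑ i, z i e) (b e) := by
  rw [coveredValue, ← sum_add_sum_compl S, add_comm]

theorem coveredValue_le_dualValue (hρ : ∀ i, IsRank (B i) (ρ i)) (hz : ∀ i, z i ∈ B i)
    (S : Finset E) : coveredValue b z ≤ dualValue b ρ S :=
  calc coveredValue b z
      = ∑ e ∈ Sᶜ, min (∑ i, z i e) (b e) + ∑ e ∈ S, min (∑ i, z i e) (b e) :=
        coveredValue_eq_sum_compl_add_sum S
    _ ≤ ∑ e ∈ Sᶜ, ∑ i, z i e + ∑ e ∈ S, b e := by gcongr <;> simp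
    _ = ∑ i, ∑ e ∈ Sᶜ, z i e + ∑ e ∈ S, b e := by rw [sum_comm]
    _ ≤ dualValue b ρ S := by
        rw [dualValue]
        gcongr with i
        exact (hρ i Sᶜ).2 ⟨z i, hz i, rfl⟩

theorem coveredValue_eq_dualValue_iff (hρ : ∀ i, IsRank (B i) (ρ i)) (hz : ∀ i, z i ∈ B i)
    (S : Finset E) : coveredValue b z = dualValue b ρ S ↔ OverProps b ρ z S := by
  have hrank : ∀ i, ∑ e ∈ Sᶜ, z i e ≤ ρ i Sᶜ := fun i => (hρ i Sᶜ).2 ⟨z i, hz i, rfl⟩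
  have h1 := sum_le_sum fun e (_ : e ∈ Sᶜ) => min_le_left (∑ i, z i e) (b e)
  have h2 := sum_le_sum fun i (_ : i ∈ univ) => hrank i
  have h3 := sum_le_sum fun e (_ : e ∈ S) => min_le_right (∑ i, z i e) (b e)
  have hswap : ∑ e ∈ Sᶜ, ∑ i, z i e = ∑ i, ∑ e ∈ Sᶜ, z i e := sum_comm
  have hchain : coveredValue b z = dualValue b ρ S ↔
      ∑ e ∈ Sᶜ, min (∑ i, z i e) (b e) = ∑ e ∈ Sᶜ, ∑ i, z i e ∧
        ∑ i, ∑ e ∈ Sᶜ, z i e = ∑ i, ρ i Sᶜ ∧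
        ∑ e ∈ S, min (∑ i, z i e) (b e) = ∑ e ∈ S, b e := by
    rw [coveredValue_eq_sum_compl_add_sum S, dualValue]
    omega
  rw [hchain, sum_eq_sum_iff_of_le fun e _ => min_le_left _ _,
    sum_eq_sum_iff_of_le fun i _ => hrank i, sum_eq_sum_iff_of_le fun e _ => min_le_right _ _]
  simp only [OverProps, min_eq_left_iff, min_eq_right_iff, mem_compl, mem_univ, forall_const,
    not_lt]
  have hover : (∀ e ∉ S, ∑ i, z i e ≤ b e) ↔ ∀ e, b e < ∑ i, z i e → e ∈ S :=
    forall_congr' fun e => by rw [← not_lt, not_imp_comm, not_not]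
  rw [hover]
  tauto

theorem sum_update_exchange_apply [DecidableEq N] (z : N → E → ℤ) (i : N) (e f t : E) :
    ∑ j, Function.update z i (z i - chi f + chi e) j t = ∑ j, z j t - chi f t + chi e t := by
  rw [← Finset.sum_apply, sum_update_of_mem (mem_univ i), ← add_sum_erase _ _ (mem_univ i),
    ← sdiff_singleton_eq_erase, Pi.add_apply, Finset.sum_apply]
  simp only [Pi.add_apply, Pi.sub_apply]
  ring

theorem coveredValue_add_le_coveredValue_update [DecidableEq N] {e f : E}
    (he : ∑ j, z j e < b e) (hef : e ≠ f) (i : N) :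
    coveredValue b z + (if b f < ∑ j, z j f then 1 else 0)
      ≤ coveredValue b (Function.update z i (z i - chi f + chi e)) := by
  set δ : ℤ := if b f < ∑ j, z j f then 0 else 1 with hδ
  have hgain : ∀ t, chi e t - δ * chi f t
      ≤ min (∑ j, z j t - chi f t + chi e t) (b t) - min (∑ j, z j t) (b t) := by
    intro t
    simp only [hδ, chi_apply]
    split_ifs <;> subst_vars <;> omega
  have hsum := sum_le_sum fun t (_ : t ∈ univ) => hgain t
  simp only [sum_sub_distrib, ← mul_sum, sum_chi, mem_univ, if_true] at hsum
  simp only [coveredValue, sum_update_exchange_apply]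
  split_ifs at hδ ⊢ <;> omega

theorem ExArc.eq_or_exArc_or_exArc_update [DecidableEq N] {i : N} (hM : MConvex (B i))
    {e f g q : E} (hi : z i - chi f + chi e ∈ B i) (harc : ExArc B z g q) :
    g = e ∨ ExArc B z e q ∨ ExArc B (Function.update z i (z i - chi f + chi e)) g q := by
  obtain ⟨j, hj⟩ := harc
  by_cases hji : j = i
  swap
  · exact Or.inr (Or.inr ⟨j, by rwa [Function.update_of_ne hji]⟩)
  subst hji
  by_cases hgq : g = q
  · subst hgq
    exact Or.inr (Or.inr ⟨j, by simpa using hi⟩)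
  by_cases hge : g = e
  · exact Or.inl hge
  rcases hM.exchange_or_double_exchange hj hi hgq hge with h | h
  · exact Or.inr (Or.inl ⟨j, h⟩)
  · refine Or.inr (Or.inr ⟨j, ?_⟩)
    rw [Function.update_self]
    convert h using 1
    abel

theorem reachesIn_update_exchange [DecidableEq N] {i : N} (hM : MConvex (B i)) {e f : E}
    (hi : z i - chi f + chi e ∈ B i) (hf : ¬ b f < ∑ j, z j f) {k : ℕ}
    (he : ∀ m ≤ k, ¬ ReachesIn (ExArc B z) (fun g => b g < ∑ j, z j g) m e) :
    ∀ m ≤ k, ∀ g, ReachesIn (ExArc B z) (fun g => b g < ∑ j, z j g) m g →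
      ReachesIn (ExArc B (Function.update z i (z i - chi f + chi e)))
        (fun g => b g < ∑ j, Function.update z i (z i - chi f + chi e) j g) m g := by
  intro m
  induction m with
  | zero =>
    intro _ g hg
    have hge : g ≠ e := by rintro rfl; exact he 0 (Nat.zero_le k) hg
    have hgf : g ≠ f := by rintro rfl; exact hf hg
    simp only [ReachesIn, sum_update_exchange_apply, chi_apply, if_neg hge, if_neg hgf] at hg ⊢
    omega
  | succ m ih =>
    rintro hm g ⟨q, hgq, hq⟩
    refine ⟨q, ?_, ih (by omega) q hq⟩
    rcases hgq.eq_or_exArc_or_exArc_update hM hi with rfl | heq | h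
    · exact absurd ⟨q, hgq, hq⟩ (he (m + 1) hm)
    · exact absurd ⟨q, heq, hq⟩ (he (m + 1) hm)
    · exact h

theorem not_reachesIn_oversold_of_undersold (hM : ∀ i, MConvex (B i)) (hz : ∀ i, z i ∈ B i)
    (hopt : ∀ z' : N → E → ℤ, (∀ i, z' i ∈ B i) → coveredValue b z' ≤ coveredValue b z)
    (n : ℕ) {e : E} (he : ∑ i, z i e < b e) :
    ¬ ReachesIn (ExArc B z) (fun g => b g < ∑ i, z i g) n e := by
  classical
  induction n using Nat.strong_induction_on generalizing z e with
  | _ n ih =>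
  intro hreach
  cases n with
  | zero =>
    simp only [ReachesIn] at hreach
    omega
  | succ k =>
  obtain ⟨f, ⟨i, hi⟩, hf⟩ := hreach
  have hnot : ∀ m ≤ k, ¬ ReachesIn (ExArc B z) (fun g => b g < ∑ j, z j g) m e :=
    fun m hm => ih m (by omega) hz hopt he
  have hef : e ≠ f := by
    rintro rfl
    exact hnot k le_rfl hf
  set z' := Function.update z i (z i - chi f + chi e) with hz'
  have hz'B : ∀ j, z' j ∈ B j := by
    intro j
    by_cases hji : j = i
    · subst hji
      simpa [hz'] using hi
    · simpa [hz', Function.update_of_ne hji] using hz j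
  have hcov := coveredValue_add_le_coveredValue_update (b := b) he hef i
  have hf_not_over : ¬ b f < ∑ j, z j f := by
    intro hover
    rw [if_pos hover] at hcov
    linarith [hopt z' hz'B]
  have hopt' : ∀ y : N → E → ℤ, (∀ j, y j ∈ B j) → coveredValue b y ≤ coveredValue b z' := by
    intro y hy
    rw [if_neg hf_not_over] at hcov
    linarith [hopt y hy]
  have hf_under : ∑ j, z' j f < b f := by
    rw [hz', sum_update_exchange_apply]
    simp only [chi_apply, if_pos, if_neg hef.symm]
    omega
  exact ih k (by omega) hz'B hopt' hf_under
    (reachesIn_update_exchange (hM i) hi hf_not_over hnot k le_rfl f hf)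

open Classical in
noncomputable def oversoldReach (b : E → ℤ) (B : N → Set (E → ℤ)) (z : N → E → ℤ) :
    Finset E :=
  {e | ∃ g, Relation.ReflTransGen (ExArc B z) e g ∧ b g < ∑ i, z i g}

theorem mem_oversoldReach {e : E} :
    e ∈ oversoldReach b B z ↔ ∃ g, Relation.ReflTransGen (ExArc B z) e g ∧ b g < ∑ i, z i g := by
  simp [oversoldReach]

theorem overProps_oversoldReach (hM : ∀ i, MConvex (B i)) (hρ : ∀ i, IsRank (B i) (ρ i))
    (hz : ∀ i, z i ∈ B i)
    (hopt : ∀ z' : N → E → ℤ, (∀ i, z' i ∈ B i) → coveredValue b z' ≤ coveredValue b z) :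
    OverProps b ρ z (oversoldReach b B z) := by
  refine ⟨fun i => ?_, fun e he hunder => ?_, fun e hover => mem_oversoldReach.2 ⟨e, .refl, hover⟩⟩
  · refine (hM i).tight_of_forall_exchange (hρ i) (hz i) fun e f hexch he => ?_
    simp only [mem_compl, mem_oversoldReach] at he ⊢
    rintro ⟨g, hfg, hg⟩
    exact he ⟨g, .head ⟨i, hexch⟩ hfg, hg⟩
  · obtain ⟨g, hreach, hg⟩ := mem_oversoldReach.1 he
    obtain ⟨n, hn⟩ := hreach.exists_reachesIn (p := fun g => b g < ∑ i, z i g) hg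
    exact not_reachesIn_oversold_of_undersold hM hz hopt n hunder hn

theorem OverProps.oversoldReach_subset (hρ : ∀ i, IsRank (B i) (ρ i)) {S : Finset E}
    (hS : OverProps b ρ z S) : oversoldReach b B z ⊆ S := by
  simp only [subset_iff, mem_oversoldReach]
  rintro e ⟨g, hreach, hg⟩
  induction hreach using Relation.ReflTransGen.head_induction_on with
  | refl => exact hS.2.2 g hg
  | head harc _ hf =>
    obtain ⟨i, hi⟩ := harc
    by_contra he
    exact mem_compl.1 (Tight.mem_of_exchange (hρ i) (hS.1 i) hi (mem_compl.2 he)) hf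

theorem forall_dualValue_le_iff (hM : ∀ i, MConvex (B i)) (hρ : ∀ i, IsRank (B i) (ρ i))
    (hz : ∀ i, z i ∈ B i)
    (hopt : ∀ z' : N → E → ℤ, (∀ i, z' i ∈ B i) → coveredValue b z' ≤ coveredValue b z)
    (S : Finset E) : (∀ T, dualValue b ρ S ≤ dualValue b ρ T) ↔ OverProps b ρ z S := by
  have hR := (coveredValue_eq_dualValue_iff hρ hz _).2 (overProps_oversoldReach hM hρ hz hopt)
  rw [← coveredValue_eq_dualValue_iff hρ hz]
  refine ⟨fun hmin => le_antisymm (coveredValue_le_dualValue hρ hz S) (hR ▸ hmin _), ?_⟩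
  intro h T
  exact h ▸ coveredValue_le_dualValue hρ hz T

end PolymatroidSum

theorem stmt8_general {N : Type*} [Fintype N] (b : E → ℤ) (B : N → Set (E → ℤ))
    (hM : ∀ i, MConvex (B i))
    (ρ : N → Finset E → ℤ) (hρ : ∀ i, IsRank (B i) (ρ i))
    (z : N → E → ℤ) (hz : ∀ i, z i ∈ B i)
    (hopt : ∀ z' : N → E → ℤ, (∀ i, z' i ∈ B i) →
      coveredValue b z' ≤ coveredValue b z) :
    ∀ S : Finset E,
      ((∀ T : Finset E, dualValue b ρ S ≤ dualValue b ρ T) ∧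
        ∀ S' : Finset E, (∀ T : Finset E, dualValue b ρ S' ≤ dualValue b ρ T) →
          S ⊆ S') ↔
      (∀ e : E, e ∈ S ↔
        ∃ g : E, Relation.ReflTransGen (ExArc B z) e g ∧ b g < ∑ i, z i g) := by
  intro S
  have hR := overProps_oversoldReach hM hρ hz hopt
  simp only [forall_dualValue_le_iff hM hρ hz hopt, ← mem_oversoldReach, ← Finset.ext_iff]
  constructor
  · rintro ⟨hS, hsub⟩
    exact (hsub _ hR).antisymm (hS.oversoldReach_subset hρ)
  · rintro rfl
    exact ⟨hR, fun S' hS' => hS'.oversoldReach_subset hρ⟩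

/-- Given an optimal solution `z` of the polymatroid sum problem, the inclusion-wise
minimal maximal overdemanded set is exactly the set of items from which an oversold
item is reachable in the exchange graph. -/
theorem stmt8 {N : Type*} [Fintype N] (b : E → ℤ) (B : N → Set (E → ℤ))
    (hBox : ∀ i, B i ⊆ Box b) (hM : ∀ i, MConvex (B i))
    (ρ : N → Finset E → ℤ) (hρ : ∀ i, IsRank (B i) (ρ i))
    (z : N → E → ℤ) (hz : ∀ i, z i ∈ B i)
    (hopt : ∀ z' : N → E → ℤ, (∀ i, z' i ∈ B i) →
      coveredValue b z' ≤ coveredValue b z) :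
    ∀ S : Finset E,
      ((∀ T : Finset E, dualValue b ρ S ≤ dualValue b ρ T) ∧
        ∀ S' : Finset E, (∀ T : Finset E, dualValue b ρ S' ≤ dualValue b ρ T) →
          S ⊆ S') ↔
      (∀ e : E, e ∈ S ↔
        ∃ g : E, Relation.ReflTransGen (ExArc B z) e g ∧ b g < ∑ i, z i g) :=
  stmt8_general b B hM ρ hρ z hz hopt
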